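/- Let V be a real Hilbert space, λ > 0, B > 0, and consider T rounds of the CoRectron algorithm: A_0 = λI, ζ_0 = 0, and for each t = 1,…,T, ŵ_t = -A_{t-1}^{-1}ζ_{t-1}; the learner is given a nonempty set X_t ⊆ V, picks x̂_t ∈ X_t satisfying ⟨ŵ_t, x̂_t⟩ ≥ ⟨ŵ_t, x⟩ for all x ∈ X_t, observes x_t ∈ X_t, sets g_t = x̂_t - x_t, and updates A_t = A_{t-1} + g_t ⊗ g_t, ζ_t = ζ_{t-1} + g_t. Let u ∈ V. Assume optimal-action feedback, i.e., ⟨u, x_t⟩ ≥ ⟨u, x⟩ for all x ∈ X_t and every t, and the boundedness assumption ⟨u, x - x'⟩ ≤ B for all x, x' ∈ X_t and every t. Then, with H_T = log det(I_T + λ^{-1} K_T), the regret R_T(u) = Σ_{t=1}^T ⟨u, x_t - x̂_t⟩ satisfies R_T(u) ≤ B·H_T + ‖u‖·√(λ·H_T). -/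

import Mathlib

open scoped RealInnerProductSpace

/-- The rank-one operator `a ⊗ a : v ↦ ⟪a, v⟫ • a` on a real inner product space. -/
noncomputable def rankOne {V : Type*} [NormedAddCommGroup V] [InnerProductSpace ℝ V]
    (a : V) : V →L[ℝ] V :=
  (innerSL ℝ a).smulRight a

/-!
The iterate `ŵ_t = -A_{t-1}⁻¹ ζ_{t-1}` minimises the quadratic potential
`F_{t-1}(w) = ½ ⟪w, A_{t-1} w⟫ + ⟪ζ_{t-1}, w⟫`. Comparing how `F` grows along the iterates
with how it grows at `c • u`, round `t` contributes at least `c r_t - c² B r_t / 2 - s_t / 2`,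
where `r_t = ⟪u, x_t - x̂_t⟫ ∈ [0, B]` and `s_t = ⟪g_t, A_t⁻¹ g_t⟫ ≤ 1`; here the
greedy choice of `x̂_t` gives `⟪g_t, ŵ_t⟫ ≥ 0`. Telescoping gives
`c R - c² B R / 2 ≤ λ c² ‖u‖² / 2 + ∑ s_t / 2` for every real `c`, so the discriminant of
this quadratic in `c` is nonpositive. Finally `s_t = q_t / (1 + q_t) ≤ log (1 + q_t)` with
`q_t = ⟪g_t, A_{t-1}⁻¹ g_t⟫`, and `∏ (1 + q_t) = det (I + λ⁻¹ K)`: multiplying `I + λ⁻¹ K`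
by a suitable unitriangular matrix makes it triangular with diagonal `1 + q_t`.
-/

open Finset ContinuousLinearMap

section Operators

variable {V : Type*} [NormedAddCommGroup V] [InnerProductSpace ℝ V]

@[simp] lemma rankOne_apply (a v : V) : rankOne a v = ⟪a, v⟫ • a := rfl

lemma isPositive_rankOne (a : V) : (rankOne a).IsPositive :=
  InnerProductSpace.isPositive_rankOne_self a

/-- By Lax–Milgram, since `⟪v, (λ • 1 + P) v⟫ ≥ λ ‖v‖²`. -/
lemma isUnit_smul_one_add_of_isPositive [CompleteSpace V] {lam : ℝ} (hlam : 0 < lam)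
    {P : V →L[ℝ] V} (hP : P.IsPositive) : IsUnit (lam • 1 + P) := by
  have hcoercive : IsCoercive ((innerSL ℝ).comp (lam • 1 + P)) := by
    refine ⟨lam, hlam, fun v => ?_⟩
    have := hP.inner_nonneg_left v
    simp only [comp_apply, innerSL_apply_apply, add_apply, smul_apply, one_apply_eq_self,
      inner_add_left, real_inner_smul_left, real_inner_self_eq_norm_sq]
    nlinarith
  have hE : (hcoercive.continuousLinearEquivOfBilin : V →L[ℝ] V) = lam • 1 + P := by
    ext v
    refine ext_inner_right ℝ fun w => ?_
    rw [ContinuousLinearEquiv.coe_coe, hcoercive.continuousLinearEquivOfBilin_apply]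
    rfl
  exact hE ▸ hcoercive.continuousLinearEquivOfBilin.toUnit.isUnit

lemma apply_ringInverse_apply {A : V →L[ℝ] V} (hA : IsUnit A) (v : V) :
    A (Ring.inverse A v) = v := by
  rw [← mul_apply_eq_comp, Ring.mul_inverse_cancel A hA, one_apply_eq_self]

noncomputable def regCov {ι : Type*} (lam : ℝ) (g : ι → V) (s : Finset ι) : V →L[ℝ] V :=
  lam • 1 + ∑ j ∈ s, rankOne (g j)

variable {ι : Type*} {lam : ℝ} {g : ι → V} {s : Finset ι}

lemma regCov_apply (v : V) : regCov lam g s v = lam • v + ∑ j ∈ s, ⟪g j, v⟫ • g j := by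
  simp [regCov]

lemma regCov_insert [DecidableEq ι] {j : ι} (hj : j ∉ s) :
    regCov lam g (insert j s) = regCov lam g s + rankOne (g j) := by
  rw [regCov, regCov, sum_insert hj, add_comm (rankOne _), add_assoc]

lemma isPositive_regCov (hlam : 0 ≤ lam) : (regCov lam g s).IsPositive :=
  (isPositive_one.smul_of_nonneg hlam).add (isPositive_sum s fun j _ => isPositive_rankOne (g j))

lemma isUnit_regCov [CompleteSpace V] (hlam : 0 < lam) : IsUnit (regCov lam g s) :=
  isUnit_smul_one_add_of_isPositive hlam (isPositive_sum s fun j _ => isPositive_rankOne (g j))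

lemma eq_regCov_of_forall_succ {T : ℕ} {g : Fin T → V} {A : ℕ → V →L[ℝ] V}
    (h0 : A 0 = lam • 1) (hsucc : ∀ t : Fin T, A (t + 1) = A t + rankOne (g t)) :
    ∀ n ≤ T, A n = regCov lam g {j | (j : ℕ) < n} := by
  intro n
  induction n with
  | zero => simpa [regCov] using h0
  | succ n ih =>
    intro hn
    have hinsert : ({j | (j : ℕ) < n + 1} : Finset (Fin T)) =
        insert (⟨n, hn⟩ : Fin T) ({j | (j : ℕ) < n} : Finset (Fin T)) := by
      ext j
      simp only [mem_filter, mem_univ, true_and, mem_insert, Fin.ext_iff]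
      omega
    rw [hsucc ⟨n, hn⟩, ih (Nat.le_of_succ_le hn), hinsert, regCov_insert (by simp)]

end Operators

section Potential

variable {V : Type*} [NormedAddCommGroup V] [InnerProductSpace ℝ V]

noncomputable def potential (A : V →L[ℝ] V) (ζ w : V) : ℝ := ⟪w, A w⟫ / 2 + ⟪ζ, w⟫

variable {A : V →L[ℝ] V} {ζ g x y y' z : V}

lemma potential_smul_one_zero (lam : ℝ) (w : V) :
    potential (lam • 1) 0 w = lam * ‖w‖ ^ 2 / 2 := by
  simp [potential, real_inner_smul_right]

lemma potential_add_rankOne (w : V) :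
    potential (A + rankOne g) (ζ + g) w = potential A ζ w + ⟪g, w⟫ + ⟪g, w⟫ ^ 2 / 2 := by
  simp only [potential, add_apply, rankOne_apply, inner_add_right, inner_add_left,
    real_inner_smul_right, real_inner_comm w g]
  ring

lemma potential_sub_potential_of_apply_eq_neg (hA : (A : V →ₗ[ℝ] V).IsSymmetric)
    (hy : A y = -ζ) (w : V) :
    potential A ζ w - potential A ζ y = ⟪w - y, A (w - y)⟫ / 2 := by
  have hsymm : ⟪A y, w⟫ = ⟪y, A w⟫ := hA y w
  have hyw : ⟪y, A w⟫ = -⟪ζ, w⟫ := by rw [← hsymm, hy, inner_neg_left]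
  simp only [potential, map_sub, inner_sub_left, inner_sub_right, hyw, hy, inner_neg_right,
    real_inner_comm ζ w, real_inner_comm ζ y]
  ring

lemma potential_le_of_apply_eq_neg (hA : A.IsPositive) (hy : A y = -ζ) (w : V) :
    potential A ζ y ≤ potential A ζ w := by
  have := potential_sub_potential_of_apply_eq_neg hA.isSymmetric hy w
  have := hA.inner_nonneg_right (w - y)
  linarith

lemma isSymmetric_add_rankOne (hA : (A : V →ₗ[ℝ] V).IsSymmetric) :
    ((A + rankOne g : V →L[ℝ] V) : V →ₗ[ℝ] V).IsSymmetric := by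
  rw [toLinearMap_add]
  exact hA.add (isPositive_rankOne g).isSymmetric

/-- Passing from `y` to the new minimiser `y'` costs the linearised loss `a + a² / 2` and gains
`(1 + a)² s / 2` from re-minimising, where `a = ⟪g, y⟫` and `s = ⟪g, z⟫`. -/
lemma potential_succ_sub_potential (hA : (A : V →ₗ[ℝ] V).IsSymmetric) (hy : A y = -ζ)
    (hy' : (A + rankOne g) y' = -(ζ + g)) (hz : (A + rankOne g) z = g) :
    potential (A + rankOne g) (ζ + g) y' - potential A ζ y =
      ⟪g, y⟫ + ⟪g, y⟫ ^ 2 / 2 - (1 + ⟪g, y⟫) ^ 2 * ⟪g, z⟫ / 2 := by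
  have hA' := isSymmetric_add_rankOne (g := g) hA
  have hd : (A + rankOne g) (y - y') = (1 + ⟪g, y⟫) • g := by
    rw [map_sub, hy', add_apply, hy, rankOne_apply]
    module
  have hdg : ⟪y - y', g⟫ = (1 + ⟪g, y⟫) * ⟪g, z⟫ :=
    calc ⟪y - y', g⟫ = ⟪y - y', (A + rankOne g) z⟫ := by rw [hz]
      _ = ⟪(A + rankOne g) (y - y'), z⟫ := (hA' _ _).symm
      _ = (1 + ⟪g, y⟫) * ⟪g, z⟫ := by rw [hd, real_inner_smul_left]
  have hgap := potential_sub_potential_of_apply_eq_neg hA' hy' y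
  rw [potential_add_rankOne, hd, real_inner_smul_right, hdg] at hgap
  linear_combination -hgap

lemma inner_mul_one_add_inner (hA : (A : V →ₗ[ℝ] V).IsSymmetric) (hx : A x = g)
    (hz : (A + rankOne g) z = g) : ⟪g, z⟫ * (1 + ⟪g, x⟫) = ⟪g, x⟫ := by
  have hA'x : (A + rankOne g) x = (1 + ⟪g, x⟫) • g := by
    rw [add_apply, hx, rankOne_apply]
    module
  have : ⟪(A + rankOne g) z, x⟫ = ⟪z, (A + rankOne g) x⟫ := isSymmetric_add_rankOne hA z x
  rw [hz, hA'x, real_inner_smul_right, real_inner_comm g z] at this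
  linarith

lemma round_le_potential_gap_sub (hA : A.IsPositive) (hy : A y = -ζ)
    (hy' : (A + rankOne g) y' = -(ζ + g)) (hz : (A + rankOne g) z = g)
    (hlearner : 0 ≤ ⟪g, y⟫) {u : V} {r B : ℝ} (hgu : ⟪g, u⟫ = -r) (hr0 : 0 ≤ r) (hrB : r ≤ B)
    (c : ℝ) :
    c * r - c ^ 2 * B * r / 2 - ⟪g, z⟫ / 2 ≤
      (potential (A + rankOne g) (ζ + g) y' - potential (A + rankOne g) (ζ + g) (c • u)) -
        (potential A ζ y - potential A ζ (c • u)) := by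
  have hs1 : ⟪g, z⟫ ≤ 1 := by
    have hzAz := hA.inner_nonneg_right z
    have hz' : ⟪z, (A + rankOne g) z⟫ = ⟪z, A z⟫ + ⟪g, z⟫ ^ 2 := by
      rw [add_apply, inner_add_right, rankOne_apply, real_inner_smul_right, real_inner_comm z g]
      ring
    rw [hz, real_inner_comm] at hz'
    nlinarith
  have hlearner_step := potential_succ_sub_potential hA.isSymmetric hy hy' hz
  have hcomparator_step := potential_add_rankOne (A := A) (ζ := ζ) (g := g) (c • u)
  rw [real_inner_smul_right, hgu] at hcomparator_step
  -- the slack is `(1 - s) (a + a² / 2) + c² r (B - r) / 2 ≥ 0`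
  nlinarith [mul_nonneg (mul_nonneg hlearner hlearner) (sub_nonneg.2 hs1),
    mul_nonneg hlearner (sub_nonneg.2 hs1),
    mul_nonneg (sq_nonneg c) (mul_nonneg hr0 (sub_nonneg.2 hrB))]

end Potential

section Regret

variable {V : Type*} [NormedAddCommGroup V] [InnerProductSpace ℝ V]
  {T : ℕ} {A : ℕ → V →L[ℝ] V} {ζ w : ℕ → V} {g z : Fin T → V} {u : V} {r : Fin T → ℝ}
  {B : ℝ}

theorem sum_le_potential_sub_potential
    (hpos : ∀ n ≤ T, (A n).IsPositive) (hA : ∀ t : Fin T, A (t + 1) = A t + rankOne (g t))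
    (hζ : ∀ t : Fin T, ζ (t + 1) = ζ t + g t) (hw : ∀ n ≤ T, A n (w n) = -ζ n)
    (hz : ∀ t : Fin T, A (t + 1) (z t) = g t) (hlearner : ∀ t : Fin T, 0 ≤ ⟪g t, w t⟫)
    (hgu : ∀ t, ⟪g t, u⟫ = -r t) (hr0 : ∀ t, 0 ≤ r t) (hrB : ∀ t, r t ≤ B) (c : ℝ) :
    c * (∑ t, r t) - c ^ 2 * B * (∑ t, r t) / 2 - (∑ t, ⟪g t, z t⟫) / 2 ≤
      potential (A 0) (ζ 0) (c • u) - potential (A 0) (ζ 0) (w 0) := by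
  set gap : ℕ → ℝ := fun n => potential (A n) (ζ n) (w n) - potential (A n) (ζ n) (c • u)
  have hround (t : Fin T) :
      c * r t - c ^ 2 * B * r t / 2 - ⟪g t, z t⟫ / 2 ≤ gap (t + 1) - gap t := by
    have hy' := hw (t + 1) t.2
    have hzt := hz t
    simp only [gap, hA t, hζ t] at hy' hzt ⊢
    exact round_le_potential_gap_sub (hpos t t.2.le) (hw t t.2.le) hy' hzt (hlearner t)
      (hgu t) (hr0 t) (hrB t) c
  have hsum := (sum_le_sum fun t _ => hround t).trans_eq <| by
    rw [Fin.sum_univ_eq_sum_range (fun n => gap (n + 1) - gap n), sum_range_sub]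
  simp only [sum_sub_distrib, ← sum_div, ← mul_sum] at hsum
  have hgapT : gap T ≤ 0 :=
    sub_nonpos.2 (potential_le_of_apply_eq_neg (hpos T le_rfl) (hw T le_rfl) (c • u))
  linarith

end Regret

section Determinant

variable {V : Type*} [NormedAddCommGroup V] [InnerProductSpace ℝ V]
  {ι : Type*} [Fintype ι] [LinearOrder ι]

/-- Right multiplication by the unitriangular matrix `1 - N`, `N j t = ⟪g j, x t⟫` for `j < t`,
makes `1 + λ⁻¹ K` lower triangular with diagonal entries `1 + ⟪g t, x t⟫`. -/
theorem det_one_add_inv_smul_gram {lam : ℝ} (hlam : lam ≠ 0) (g x : ι → V)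
    (hx : ∀ t, regCov lam g {j | j < t} (x t) = g t) :
    (1 + lam⁻¹ • Matrix.gram ℝ g).det = ∏ t, (1 + ⟪g t, x t⟫) := by
  set N : Matrix ι ι ℝ := Matrix.of fun j t => if j < t then ⟪g j, x t⟫ else 0
  have hGN (i t : ι) : (Matrix.gram ℝ g * N) i t = ⟪g i, g t⟫ - lam * ⟪g i, x t⟫ := by
    simp only [Matrix.mul_apply, Matrix.gram_apply, N, Matrix.of_apply, mul_ite, mul_zero,
      ← sum_filter]
    rw [← hx t, regCov_apply, inner_add_right, inner_sum]
    simp only [real_inner_smul_right, mul_comm]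
    ring
  have hentry (i t : ι) : ((1 + lam⁻¹ • Matrix.gram ℝ g) * (1 - N)) i t =
      (if i = t then 1 else 0) + (if i < t then 0 else ⟪g i, x t⟫) := by
    simp only [Matrix.add_mul, Matrix.mul_sub, Matrix.one_mul, Matrix.mul_one, Matrix.smul_mul,
      Matrix.add_apply, Matrix.sub_apply, Matrix.smul_apply, hGN, Matrix.gram_apply, N,
      Matrix.of_apply, Matrix.one_apply, smul_eq_mul]
    field_simp
    split_ifs <;> ring
  have hupper : (1 - N).IsUpperTriangular := by
    intro i j (hji : j < i)
    simp [N, hji.ne', not_lt.2 hji.le]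
  have hlower : ((1 + lam⁻¹ • Matrix.gram ℝ g) * (1 - N)).IsLowerTriangular := by
    intro i t (hit : i < t)
    simp [hentry, hit.ne, hit]
  calc (1 + lam⁻¹ • Matrix.gram ℝ g).det
      = (1 + lam⁻¹ • Matrix.gram ℝ g).det * (1 - N).det := by
        simp [Matrix.det_of_isUpperTriangular hupper, N]
    _ = ∏ t, (1 + ⟪g t, x t⟫) := by
        rw [← Matrix.det_mul, Matrix.det_of_isLowerTriangular _ hlower]
        simp [hentry]

lemma le_log_one_add_of_mul_one_add_eq {q s : ℝ} (hq : 0 ≤ q) (h : s * (1 + q) = q) :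
    s ≤ Real.log (1 + q) := by
  have hs : s = 1 - (1 + q)⁻¹ := by
    field_simp
    linarith
  exact hs ▸ Real.one_sub_inv_le_log_of_pos (by linarith)

/-- Elliptical potential lemma: with `x t` solving the system before round `t`,
`⟪g t, z t⟫ = q / (1 + q) ≤ log (1 + q)` for `q = ⟪g t, x t⟫`, and `∏ (1 + q)` is the
determinant. -/
theorem sum_inner_le_log_det [CompleteSpace V] {lam : ℝ} (hlam : 0 < lam) (g z : ι → V)
    (hz : ∀ t, regCov lam g {j | j ≤ t} (z t) = g t) :
    ∑ t, ⟪g t, z t⟫ ≤ Real.log (1 + lam⁻¹ • Matrix.gram ℝ g).det := by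
  set x : ι → V := fun t => Ring.inverse (regCov lam g {j | j < t}) (g t)
  have hx (t : ι) : regCov lam g {j | j < t} (x t) = g t :=
    apply_ringInverse_apply (isUnit_regCov hlam) _
  have hsucc (t : ι) :
      regCov lam g {j | j ≤ t} = regCov lam g {j | j < t} + rankOne (g t) := by
    have : ({j | j ≤ t} : Finset ι) = insert t ({j | j < t} : Finset ι) := by
      ext j
      simp [le_iff_lt_or_eq, or_comm]
    rw [this, regCov_insert (by simp)]
  have hq (t : ι) : 0 ≤ ⟪g t, x t⟫ := by
    simpa [hx t] using
      (isPositive_regCov (g := g) (s := {j | j < t}) hlam.le).inner_nonneg_left (x t)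
  rw [det_one_add_inv_smul_gram hlam.ne' g x hx, Real.log_prod fun t _ => by linarith [hq t]]
  refine sum_le_sum fun t _ => le_log_one_add_of_mul_one_add_eq (hq t) ?_
  exact inner_mul_one_add_inner (isPositive_regCov hlam.le).isSymmetric (hx t) (hsucc t ▸ hz t)

end Determinant

lemma le_mul_add_mul_sqrt_of_forall {R B H lam U : ℝ} (hB : 0 ≤ B) (hlam : 0 ≤ lam)
    (hU : 0 ≤ U) (h : ∀ c, c * R - c ^ 2 * B * R / 2 ≤ lam * c ^ 2 * U ^ 2 / 2 + H / 2) :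
    R ≤ B * H + U * √(lam * H) := by
  have hH : 0 ≤ H := by linarith [h 0]
  have hdiscr : discrim (B * R + lam * U ^ 2) (-2 * R) H ≤ 0 :=
    discrim_le_zero fun c => by linarith [h c]
  set s := U * √(lam * H)
  have hs : 0 ≤ s := mul_nonneg hU (Real.sqrt_nonneg _)
  have hsq : s ^ 2 = lam * U ^ 2 * H := by
    rw [mul_pow, Real.sq_sqrt (mul_nonneg hlam hH)]
    ring
  rw [discrim] at hdiscr
  by_contra! hR
  nlinarith [mul_pos (sub_pos.2 hR) (show 0 < R + s by nlinarith [mul_nonneg hB hH]),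
    mul_nonneg (mul_nonneg hB hH) hs]

theorem corectron_regret_bound_optimal_feedback_general
    {V : Type*} [NormedAddCommGroup V] [InnerProductSpace ℝ V] [CompleteSpace V]
    (T : ℕ) (lam B : ℝ) (hlam : 0 < lam) (hB : 0 < B)
    (X : Fin T → Set V)
    (xhat xobs g : Fin T → V)
    (A : ℕ → (V →L[ℝ] V)) (ζ : ℕ → V) (what : Fin T → V)
    (hA0 : A 0 = lam • (1 : V →L[ℝ] V)) (hζ0 : ζ 0 = 0)
    (hwhat : ∀ t : Fin T, what t = -(Ring.inverse (A t)) (ζ t))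
    (hxhat_mem : ∀ t, xhat t ∈ X t)
    (hxhat_opt : ∀ t : Fin T, ∀ y ∈ X t, ⟪what t, y⟫ ≤ ⟪what t, xhat t⟫)
    (hxobs_mem : ∀ t, xobs t ∈ X t)
    (hg : ∀ t, g t = xhat t - xobs t)
    (hA : ∀ t : Fin T, A ((t : ℕ) + 1) = A t + rankOne (g t))
    (hζ : ∀ t : Fin T, ζ ((t : ℕ) + 1) = ζ t + g t)
    (u : V)
    (hopt : ∀ t : Fin T, ∀ y ∈ X t, ⟪u, y⟫ ≤ ⟪u, xobs t⟫)
    (hbound : ∀ t : Fin T, ∀ x ∈ X t, ∀ x' ∈ X t, ⟪u, x - x'⟫ ≤ B)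
    (K : Matrix (Fin T) (Fin T) ℝ)
    (hK : ∀ i j, K i j = ⟪g i, g j⟫) :
    (∑ t, ⟪u, xobs t - xhat t⟫) ≤
      B * Real.log (1 + lam⁻¹ • K).det +
        ‖u‖ * Real.sqrt (lam * Real.log (1 + lam⁻¹ • K).det) := by
  have hAn := eq_regCov_of_forall_succ hA0 hA
  have hsolve (n : ℕ) (hn : n ≤ T) (v : V) : A n (Ring.inverse (A n) v) = v :=
    apply_ringInverse_apply (hAn n hn ▸ isUnit_regCov hlam) v
  set z : Fin T → V := fun t => Ring.inverse (A (t + 1)) (g t)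
  have hlearner (t : Fin T) : 0 ≤ ⟪g t, -Ring.inverse (A t) (ζ t)⟫ := by
    have := hxhat_opt t _ (hxobs_mem t)
    rwa [hwhat, ← sub_nonneg, ← inner_sub_right, ← hg, real_inner_comm] at this
  have hregret (c : ℝ) := sum_le_potential_sub_potential (u := u)
    (fun n hn => hAn n hn ▸ isPositive_regCov hlam.le) hA hζ
    (fun n hn => by rw [map_neg, hsolve n hn]) (fun t => hsolve _ t.2 (g t)) hlearner
    (fun t => by rw [hg, ← neg_sub, inner_neg_left, real_inner_comm])
    (fun t => by simpa [inner_sub_right] using hopt t _ (hxhat_mem t))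
    (fun t => hbound t _ (hxobs_mem t) _ (hxhat_mem t)) c
  have hSH : ∑ t, ⟪g t, z t⟫ ≤ Real.log (1 + lam⁻¹ • K).det := by
    rw [show K = Matrix.gram ℝ g from Matrix.ext hK]
    refine sum_inner_le_log_det hlam g z fun t => ?_
    have hprefix : ({j | j ≤ t} : Finset (Fin T)) = ({j | (j : ℕ) < t + 1} : Finset (Fin T)) :=
      filter_congr fun j _ => Nat.lt_succ_iff.symm
    rw [hprefix, ← hAn _ t.2]
    exact hsolve _ t.2 _
  refine le_mul_add_mul_sqrt_of_forall hB.le hlam.le (norm_nonneg u) fun c => ?_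
  have := hregret c
  simp only [hA0, hζ0, potential_smul_one_zero, map_zero, neg_zero, norm_zero, norm_smul,
    Real.norm_eq_abs, mul_pow, sq_abs] at this
  linarith [hSH]

/-- Regret bound for CoRectron under optimal-action feedback and boundedness:
`R_T(u) ≤ B·H_T + ‖u‖·√(λ·H_T)` where `H_T = log det (I_T + λ⁻¹ K_T)`. -/
theorem corectron_regret_bound_optimal_feedback
    {V : Type*} [NormedAddCommGroup V] [InnerProductSpace ℝ V] [CompleteSpace V]
    (T : ℕ) (lam B : ℝ) (hlam : 0 < lam) (hB : 0 < B)
    (X : Fin T → Set V) (hXne : ∀ t, (X t).Nonempty)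
    (xhat xobs g : Fin T → V)
    (A : ℕ → (V →L[ℝ] V)) (ζ : ℕ → V) (what : Fin T → V)
    (hA0 : A 0 = lam • (1 : V →L[ℝ] V)) (hζ0 : ζ 0 = 0)
    (hwhat : ∀ t : Fin T, what t = -(Ring.inverse (A t)) (ζ t))
    (hxhat_mem : ∀ t, xhat t ∈ X t)
    (hxhat_opt : ∀ t : Fin T, ∀ y ∈ X t, ⟪what t, y⟫ ≤ ⟪what t, xhat t⟫)
    (hxobs_mem : ∀ t, xobs t ∈ X t)
    (hg : ∀ t, g t = xhat t - xobs t)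
    (hA : ∀ t : Fin T, A ((t : ℕ) + 1) = A t + rankOne (g t))
    (hζ : ∀ t : Fin T, ζ ((t : ℕ) + 1) = ζ t + g t)
    (u : V)
    (hopt : ∀ t : Fin T, ∀ y ∈ X t, ⟪u, y⟫ ≤ ⟪u, xobs t⟫)
    (hbound : ∀ t : Fin T, ∀ x ∈ X t, ∀ x' ∈ X t, ⟪u, x - x'⟫ ≤ B)
    (K : Matrix (Fin T) (Fin T) ℝ)
    (hK : ∀ i j, K i j = ⟪g i, g j⟫) :
    (∑ t, ⟪u, xobs t - xhat t⟫) ≤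
      B * Real.log (1 + lam⁻¹ • K).det +
        ‖u‖ * Real.sqrt (lam * Real.log (1 + lam⁻¹ • K).det) :=
  corectron_regret_bound_optimal_feedback_general T lam B hlam hB X xhat xobs g A ζ what hA0 hζ0
    hwhat hxhat_mem hxhat_opt hxobs_mem hg hA hζ u hopt hbound K hK
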